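/- Let V and W be Hilbert spaces, a : V × V → ℝ a continuous coercive bilinear form, b : V × W → ℝ a continuous bilinear form satisfying the inf-sup (Babuška–Brezzi) condition inf_{q∈W, q≠0} sup_{v∈V, v≠0} b(v,q)/(‖v‖‖q‖) ≥ β > 0. Then for every f ∈ V' and g ∈ W' there exists a unique pair (u, p) ∈ V × W such that a(u,v) + b(v,p) = f(v) for all v ∈ V and b(u,q) = g(q) for all q ∈ W, with ‖u‖ + ‖p‖ ≤ C(‖f‖ + ‖g‖). -/

import Mathlib

/-!
Riesz representation turns the coercive form `a` into an isomorphism `A : V ≃L V'` (Lax–Milgram).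
The inf-sup condition says `‖b(·, q)‖_{V'} ≥ β ‖q‖`, so the Schur complement
`S q = b(A⁻¹ b(·, q), ·)` satisfies `S(q, q) = a(z, z) ≥ α ‖z‖² ≳ α β² ‖q‖² / ‖a‖²` with
`z = A⁻¹ b(·, q)`; it is coercive, hence onto by Lax–Milgram again. Block elimination then makes
the saddle point operator `(u, p) ↦ (a(u, ·) + b(·, p), b(u, ·))` onto, and testing its kernel
against `(u, 0)` shows it is injective. By the open mapping theorem it is an isomorphism, and the
norm of its inverse gives the stability constant.
-/

theorem IsCoercive.bijective {V : Type*} [NormedAddCommGroup V] [InnerProductSpace ℝ V]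
    [CompleteSpace V] {B : V →L[ℝ] V →L[ℝ] ℝ} (hB : IsCoercive B) : Function.Bijective B := by
  have h : ⇑B = InnerProductSpace.toDual ℝ V ∘ hB.continuousLinearEquivOfBilin := by
    ext u w
    simp
  rw [h]
  exact (InnerProductSpace.toDual ℝ V).bijective.comp hB.continuousLinearEquivOfBilin.bijective

noncomputable def IsCoercive.strongDualEquiv {V : Type*} [NormedAddCommGroup V]
    [InnerProductSpace ℝ V] [CompleteSpace V] {B : V →L[ℝ] V →L[ℝ] ℝ} (hB : IsCoercive B) :
    V ≃L[ℝ] StrongDual ℝ V :=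
  .ofBijective B (LinearMap.ker_eq_bot.mpr hB.bijective.1)
    (LinearMap.range_eq_top.mpr hB.bijective.2)

theorem surjective_saddle_of_surjective_schur {R M N P Q : Type*} [Ring R]
    [AddCommGroup M] [Module R M] [AddCommGroup N] [Module R N]
    [AddCommGroup P] [Module R P] [AddCommGroup Q] [Module R Q]
    (A : M ≃ₗ[R] N) (Bt : P →ₗ[R] N) (Bo : M →ₗ[R] Q)
    (hS : Function.Surjective (Bo ∘ A.symm ∘ Bt)) :
    Function.Surjective fun x : M × P => (A x.1 + Bt x.2, Bo x.1) := by
  rintro ⟨F, G⟩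
  obtain ⟨p, hp⟩ := hS (Bo (A.symm F) - G)
  refine ⟨(A.symm (F - Bt p), p), ?_⟩
  simp only [Function.comp_apply] at hp
  simp [hp]

theorem Prod.norm_fst_add_norm_snd_le {E F : Type*} [SeminormedAddCommGroup E]
    [SeminormedAddCommGroup F] (x : E × F) : ‖x.1‖ + ‖x.2‖ ≤ 2 * ‖x‖ := by
  rw [Prod.norm_def]
  linarith [le_max_left ‖x.1‖ ‖x.2‖, le_max_right ‖x.1‖ ‖x.2‖]

section SaddlePoint

variable {V W : Type*} [NormedAddCommGroup V] [NormedSpace ℝ V]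
  [NormedAddCommGroup W] [NormedSpace ℝ W]

theorem mul_norm_le_norm_flip_of_infSup (b : V →L[ℝ] W →L[ℝ] ℝ) {β : ℝ}
    (hinfsup : ∀ q : W, q ≠ 0 → β ≤ ⨆ v : {v : V // v ≠ 0}, b (v : V) q / (‖(v : V)‖ * ‖q‖))
    (q : W) : β * ‖q‖ ≤ ‖b.flip q‖ := by
  rcases eq_or_ne q 0 with rfl | hq
  · simp
  have hsup : ⨆ v : {v : V // v ≠ 0}, b (v : V) q / (‖(v : V)‖ * ‖q‖) ≤ ‖b.flip q‖ / ‖q‖ := by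
    refine Real.iSup_le (fun ⟨v, hv⟩ => ?_) (by positivity)
    have : 0 < ‖v‖ := norm_pos_iff.mpr hv
    calc b v q / (‖v‖ * ‖q‖) ≤ ‖b.flip q‖ * ‖v‖ / (‖v‖ * ‖q‖) := by
          gcongr
          exact (le_abs_self _).trans ((b.flip q).le_opNorm v)
      _ = ‖b.flip q‖ / ‖q‖ := by field_simp
  exact (le_div_iff₀ (norm_pos_iff.mpr hq)).mp ((hinfsup q hq).trans hsup)

theorem isCoercive_schur {a : V →L[ℝ] V →L[ℝ] ℝ} (ha : IsCoercive a)
    {b : V →L[ℝ] W →L[ℝ] ℝ} {β : ℝ} (hβ : 0 < β) (hlow : ∀ q, β * ‖q‖ ≤ ‖b.flip q‖)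
    (T : StrongDual ℝ V →L[ℝ] V) (hT : ∀ φ, a (T φ) = φ) :
    IsCoercive (b.comp (T.comp b.flip)) := by
  obtain ⟨α, hα, hcoer⟩ := ha
  -- `‖a‖ + 1` instead of `‖a‖`, which vanishes when `V` is trivial
  refine ⟨α * (β / (‖a‖ + 1)) ^ 2, by positivity, fun q => ?_⟩
  set z := T (b.flip q)
  have hz : a z = b.flip q := hT _
  have hqz : β / (‖a‖ + 1) * ‖q‖ ≤ ‖z‖ := by
    rw [div_mul_eq_mul_div, div_le_iff₀ (by positivity)]
    calc β * ‖q‖ ≤ ‖a z‖ := hz ▸ hlow q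
      _ ≤ ‖a‖ * ‖z‖ := a.le_opNorm z
      _ ≤ ‖z‖ * (‖a‖ + 1) := by nlinarith [norm_nonneg z]
  calc α * (β / (‖a‖ + 1)) ^ 2 * ‖q‖ * ‖q‖ = α * (β / (‖a‖ + 1) * ‖q‖) ^ 2 := by ring
    _ ≤ α * ‖z‖ ^ 2 := by gcongr
    _ ≤ a z z := by simpa only [sq, mul_assoc] using hcoer z
    _ = b.comp (T.comp b.flip) q q := by rw [hz]; rfl

noncomputable def saddleOp (a : V →L[ℝ] V →L[ℝ] ℝ) (b : V →L[ℝ] W →L[ℝ] ℝ) :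
    V × W →L[ℝ] StrongDual ℝ V × StrongDual ℝ W :=
  (a.coprod b.flip).prod (b.comp (.fst ℝ V W))

theorem saddleOp_apply (a : V →L[ℝ] V →L[ℝ] ℝ) (b : V →L[ℝ] W →L[ℝ] ℝ) (x : V × W) :
    saddleOp a b x = (a x.1 + b.flip x.2, b x.1) := rfl

theorem saddleOp_eq_iff (a : V →L[ℝ] V →L[ℝ] ℝ) (b : V →L[ℝ] W →L[ℝ] ℝ) (x : V × W)
    (f : StrongDual ℝ V) (g : StrongDual ℝ W) :
    saddleOp a b x = (f, g) ↔ (∀ v, a x.1 v + b v x.2 = f v) ∧ ∀ q, b x.1 q = g q := by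
  simp [saddleOp_apply, ContinuousLinearMap.ext_iff]

theorem saddleOp_injective {a : V →L[ℝ] V →L[ℝ] ℝ} (ha : IsCoercive a)
    {b : V →L[ℝ] W →L[ℝ] ℝ} {β : ℝ} (hβ : 0 < β) (hlow : ∀ q, β * ‖q‖ ≤ ‖b.flip q‖) :
    Function.Injective (saddleOp a b) := by
  obtain ⟨α, hα, hcoer⟩ := ha
  refine (injective_iff_map_eq_zero _).mpr fun ⟨u, p⟩ h => ?_
  obtain ⟨h₁, h₂⟩ := Prod.ext_iff.mp h
  simp only [saddleOp_apply, Prod.fst_zero, Prod.snd_zero] at h₁ h₂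
  have hu : u = 0 := by
    have hau : a u u = 0 := by simpa [h₂] using DFunLike.congr_fun h₁ u
    have : α * (‖u‖ * ‖u‖) ≤ 0 := by simpa only [hau, mul_assoc] using hcoer u
    exact norm_le_zero_iff.mp (by nlinarith [nonpos_of_mul_nonpos_right this hα])
  subst hu
  have hp : b.flip p = 0 := by simpa using h₁
  have : p = 0 :=
    norm_le_zero_iff.mp (nonpos_of_mul_nonpos_right (by simpa [hp] using hlow p) hβ)
  simp [this]

end SaddlePoint

section Hilbert

variable {V W : Type*} [NormedAddCommGroup V] [InnerProductSpace ℝ V] [CompleteSpace V]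
  [NormedAddCommGroup W] [InnerProductSpace ℝ W] [CompleteSpace W]
  {a : V →L[ℝ] V →L[ℝ] ℝ} {b : V →L[ℝ] W →L[ℝ] ℝ} {β : ℝ}

theorem surjective_saddleOp (ha : IsCoercive a) (hβ : 0 < β)
    (hlow : ∀ q, β * ‖q‖ ≤ ‖b.flip q‖) : Function.Surjective (saddleOp a b) := by
  let A := ha.strongDualEquiv
  have hS := isCoercive_schur ha hβ hlow (A.symm : StrongDual ℝ V →L[ℝ] V) A.apply_symm_apply
  exact surjective_saddle_of_surjective_schur A.toLinearEquiv b.flip.toLinearMap b.toLinearMap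
    hS.bijective.2

noncomputable def saddleOpEquiv (ha : IsCoercive a) (hβ : 0 < β)
    (hlow : ∀ q, β * ‖q‖ ≤ ‖b.flip q‖) : (V × W) ≃L[ℝ] StrongDual ℝ V × StrongDual ℝ W :=
  ContinuousLinearEquiv.ofBijective (saddleOp a b)
    (LinearMap.ker_eq_bot.mpr (saddleOp_injective ha hβ hlow))
    (LinearMap.range_eq_top.mpr (surjective_saddleOp ha hβ hlow))

theorem saddleOpEquiv_apply (ha : IsCoercive a) (hβ : 0 < β)
    (hlow : ∀ q, β * ‖q‖ ≤ ‖b.flip q‖) (x : V × W) :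
    saddleOpEquiv ha hβ hlow x = saddleOp a b x := rfl

end Hilbert

theorem babuska_brezzi
    {V W : Type*}
    [NormedAddCommGroup V] [InnerProductSpace ℝ V] [CompleteSpace V]
    [NormedAddCommGroup W] [InnerProductSpace ℝ W] [CompleteSpace W]
    (a : V →L[ℝ] V →L[ℝ] ℝ) (b : V →L[ℝ] W →L[ℝ] ℝ)
    (α : ℝ) (hα : 0 < α) (hcoer : ∀ v : V, α * ‖v‖ ^ 2 ≤ a v v)
    (β : ℝ) (hβ : 0 < β)
    (hinfsup : ∀ q : W, q ≠ 0 →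
      β ≤ ⨆ v : {v : V // v ≠ 0}, b (v : V) q / (‖(v : V)‖ * ‖q‖)) :
    ∃ C > (0 : ℝ), ∀ (f : V →L[ℝ] ℝ) (g : W →L[ℝ] ℝ),
      (∃! up : V × W,
        (∀ v : V, a up.1 v + b v up.2 = f v) ∧ (∀ q : W, b up.1 q = g q)) ∧
      (∀ up : V × W,
        ((∀ v : V, a up.1 v + b v up.2 = f v) ∧ (∀ q : W, b up.1 q = g q)) →
        ‖up.1‖ + ‖up.2‖ ≤ C * (‖f‖ + ‖g‖)) := by
  have ha : IsCoercive a := ⟨α, hα, fun v => by simpa only [sq, mul_assoc] using hcoer v⟩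
  set L := saddleOpEquiv ha hβ (mul_norm_le_norm_flip_of_infSup b hinfsup)
  have hsol (f : V →L[ℝ] ℝ) (g : W →L[ℝ] ℝ) (up : V × W) :
      ((∀ v : V, a up.1 v + b v up.2 = f v) ∧ (∀ q : W, b up.1 q = g q)) ↔
        up = L.symm (f, g) := by
    rw [L.eq_symm_apply, saddleOpEquiv_apply, saddleOp_eq_iff]
  obtain ⟨K, hK, hbound⟩ := (L.symm : StrongDual ℝ V × StrongDual ℝ W →L[ℝ] V × W).bound
  refine ⟨2 * K, by positivity, fun f g =>
    ⟨⟨L.symm (f, g), (hsol f g _).mpr rfl, fun up h => (hsol f g up).mp h⟩, fun up h => ?_⟩⟩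
  calc ‖up.1‖ + ‖up.2‖ ≤ 2 * ‖up‖ := up.norm_fst_add_norm_snd_le
    _ ≤ 2 * (K * ‖(f, g)‖) := by rw [(hsol f g up).mp h]; gcongr; exact hbound (f, g)
    _ ≤ 2 * K * (‖f‖ + ‖g‖) := by
        rw [Prod.norm_mk, mul_assoc]
        gcongr
        exact max_le_add_of_nonneg (norm_nonneg f) (norm_nonneg g)
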